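/- (Kantorovich-type local convergence, existence part) Let D ⊆ ℝⁿ be open, F : D → ℝ^m (m ≤ n) differentiable with J_F of full rank m on an open convex set Ω ⊆ D. Assume: (i) there exist γ ≥ 0 and p ∈ (0,1] with ‖J_F(y) − J_F(x)‖₂ ≤ γ‖y − x‖₂^p for all x, y ∈ Ω; (ii) there exists μ > 0 with ‖J_F(x)†‖₂ ≤ μ for all x ∈ Ω. Then there exists β > 0 with τ := γμ^{1+p}β^p/(1+p) < 1 and μβ/(1 − τ) < η such that: if x₀ ∈ Ω_η := {x ∈ Ω : ∀y, ‖y − x‖₂ < η ⇒ y ∈ Ω} and ‖F(x₀)‖₂ < β, then the Normal Flow iterates x_{k+1} = x_k − J_F(x_k)†F(x_k) are well defined and converge to some x* ∈ Ω with F(x*) = 0. -/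

import Mathlib

open Matrix

noncomputable def kthLargest {m : Type*} [Fintype m] (f : m → ℝ) (j : ℕ) : ℝ :=
  let c := Fintype.card m
  let g : Fin c → ℝ := f ∘ (Fintype.equivFin m).symm
  if h : c - j < c then (g ∘ Tuple.sort g) ⟨c - j, h⟩ else 0

noncomputable def singularValue {m n : Type*} [Fintype m] [Fintype n] [DecidableEq n]
    (A : Matrix m n ℝ) (j : ℕ) : ℝ :=
  Real.sqrt (kthLargest (show (Aᵀ * A).IsHermitian by
    simpa using Matrix.isHermitian_conjTranspose_mul_self A).eigenvalues j)

noncomputable def specNorm {m n : Type*} [Fintype m] [Fintype n] [DecidableEq n]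
    (A : Matrix m n ℝ) : ℝ := singularValue A 1

noncomputable def vec2 {n : Type*} [Fintype n] (v : n → ℝ) : ℝ :=
  Real.sqrt (∑ i, v i ^ 2)

/-- Moore–Penrose pseudoinverse of a full row-rank matrix. -/
noncomputable def pinvRow {m n : ℕ} (A : Matrix (Fin m) (Fin n) ℝ) :
    Matrix (Fin n) (Fin m) ℝ := Aᵀ * (A * Aᵀ)⁻¹

/-! A Normal Flow step `x⁺ = x - J(x)†F(x)` solves the linearisation `J(x) h = -F(x)` exactly
(`J J† = 1` for full row rank) and has length at most `μ‖F x‖`. The Hölder condition bounds the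
linearisation error, so `‖F x⁺‖ ≤ γ μ^(1+p) ‖F x‖^p ‖F x‖`; once `‖F x₀‖ < β` with `β` small this
contracts the residual by a factor `q < 1`. The steps then decay geometrically, the iterates stay
within `μ‖F x₀‖/(1-q) < η` of `x₀` (hence in `Ω`) and converge, and the limit is a zero of `F`
by continuity. -/

open Filter Topology

lemma le_kthLargest_one {m : Type*} [Fintype m] (f : m → ℝ) (i : m) :
    f i ≤ kthLargest f 1 := by
  have hc : 0 < Fintype.card m := Fintype.card_pos_iff.2 ⟨i⟩
  unfold kthLargest
  rw [dif_pos (Nat.sub_lt hc one_pos)]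
  set g : Fin (Fintype.card m) → ℝ := f ∘ (Fintype.equivFin m).symm
  have hi : f i = g (Tuple.sort g ((Tuple.sort g).symm (Fintype.equivFin m i))) := by simp [g]
  rw [hi]
  exact Tuple.monotone_sort g (Fin.le_def.2 (Nat.le_sub_one_of_lt (Fin.is_lt _)))

lemma Matrix.IsHermitian.dotProduct_mulVec_le {k : Type*} [Fintype k] [DecidableEq k]
    {M : Matrix k k ℝ} (hM : M.IsHermitian) {c : ℝ} (hc : ∀ i, hM.eigenvalues i ≤ c)
    (x : k → ℝ) : x ⬝ᵥ (M *ᵥ x) ≤ c * (x ⬝ᵥ x) := by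
  set U : Matrix k k ℝ := (hM.eigenvectorUnitary : Matrix k k ℝ)
  have hstar : star U = Uᵀ := conjTranspose_eq_transpose_of_trivial U
  have hUU : U * Uᵀ = 1 := hstar ▸ Matrix.mem_unitaryGroup_iff.mp hM.eigenvectorUnitary.2
  set y : k → ℝ := Uᵀ *ᵥ x
  have hyy : y ⬝ᵥ y = x ⬝ᵥ x := by
    rw [dotProduct_mulVec, vecMul_transpose, mulVec_mulVec, hUU, one_mulVec]
  have hdiag : x ⬝ᵥ (M *ᵥ x) = ∑ i, hM.eigenvalues i * y i ^ 2 := by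
    conv_lhs => rw [hM.spectral_theorem, Unitary.conjStarAlgAut_apply]
    rw [hstar, ← mulVec_mulVec, ← mulVec_mulVec, dotProduct_mulVec, ← mulVec_transpose]
    simp only [dotProduct, mulVec_diagonal, Function.comp_apply, RCLike.ofReal_real_eq_id, id_eq]
    exact Finset.sum_congr rfl fun i _ ↦ by ring
  rw [hdiag, ← hyy, dotProduct, Finset.mul_sum]
  exact Finset.sum_le_sum fun i _ ↦ by nlinarith [hc i, sq_nonneg (y i)]

lemma norm_toEuclideanLin_le_specNorm {m n : Type*} [Fintype m] [Fintype n] [DecidableEq n]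
    (A : Matrix m n ℝ) (v : EuclideanSpace ℝ n) :
    ‖toEuclideanLin A v‖ ≤ specNorm A * ‖v‖ := by
  have hH : (Aᵀ * A).IsHermitian := by simpa using isHermitian_conjTranspose_mul_self A
  have hsq : ‖toEuclideanLin A v‖ ^ 2 ≤ kthLargest hH.eigenvalues 1 * ‖v‖ ^ 2 := by
    simp only [← real_inner_self_eq_norm_sq, EuclideanSpace.inner_eq_star_dotProduct, star_trivial,
      ofLp_toLpLin, toLin'_apply]
    have hgram (w : n → ℝ) : (A *ᵥ w) ⬝ᵥ (A *ᵥ w) = w ⬝ᵥ ((Aᵀ * A) *ᵥ w) := by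
      rw [← mulVec_mulVec, dotProduct_mulVec w, vecMul_transpose]
    rw [hgram]
    exact hH.dotProduct_mulVec_le (le_kthLargest_one _) _
  calc ‖toEuclideanLin A v‖ = √(‖toEuclideanLin A v‖ ^ 2) := (Real.sqrt_sq (norm_nonneg _)).symm
    _ ≤ √(kthLargest hH.eigenvalues 1 * ‖v‖ ^ 2) := Real.sqrt_le_sqrt hsq
    _ = specNorm A * ‖v‖ := by rw [Real.sqrt_mul' _ (sq_nonneg _), Real.sqrt_sq (norm_nonneg _)]; rfl

lemma norm_toContinuousLinearMap_toEuclideanLin_le_specNorm {m n : Type*} [Fintype m]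
    [Fintype n] [DecidableEq n] (A : Matrix m n ℝ) :
    ‖LinearMap.toContinuousLinearMap (toEuclideanLin A)‖ ≤ specNorm A :=
  ContinuousLinearMap.opNorm_le_bound _ (Real.sqrt_nonneg _) (norm_toEuclideanLin_le_specNorm A)

lemma Matrix.isUnit_of_rank_eq_card {k K : Type*} [Fintype k] [DecidableEq k] [Field K]
    {A : Matrix k k K} (h : A.rank = Fintype.card k) : IsUnit A := by
  rw [← mulVec_surjective_iff_isUnit, ← coe_mulVecLin, ← LinearMap.range_eq_top]
  exact Submodule.eq_top_of_finrank_eq (by simpa [Matrix.rank] using h)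

lemma mul_pinvRow_eq_one {m n : ℕ} {A : Matrix (Fin m) (Fin n) ℝ} (h : A.rank = m) :
    A * pinvRow A = 1 := by
  have hgram : IsUnit (A * Aᵀ) := isUnit_of_rank_eq_card (by simp [rank_self_mul_transpose, h])
  rw [pinvRow, ← Matrix.mul_assoc, mul_nonsing_inv _ ((isUnit_iff_isUnit_det _).mp hgram)]

lemma norm_sub_sub_le_of_holder_fderiv {E G : Type*} [NormedAddCommGroup E] [NormedSpace ℝ E]
    [NormedAddCommGroup G] [NormedSpace ℝ G] {f : E → G} {f' : E → E →L[ℝ] G} {s : Set E}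
    {γ p : ℝ} (hs : Convex ℝ s) (hf : ∀ x ∈ s, HasFDerivWithinAt f (f' x) s x)
    (hhol : ∀ x ∈ s, ∀ y ∈ s, ‖f' y - f' x‖ ≤ γ * ‖y - x‖ ^ p) (hγ : 0 ≤ γ) (hp : 0 ≤ p)
    {x y : E} (hx : x ∈ s) (hy : y ∈ s) :
    ‖f y - f x - f' x (y - x)‖ ≤ γ * ‖y - x‖ ^ p * ‖y - x‖ := by
  have hseg : segment ℝ x y ⊆ s := hs.segment_subset hx hy
  refine (convex_segment x y).norm_image_sub_le_of_norm_hasFDerivWithin_le'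
    (fun z hz ↦ (hf z (hseg hz)).mono hseg) (fun z hz ↦ ?_)
    (left_mem_segment ℝ x y) (right_mem_segment ℝ x y)
  refine (hhol x hx z (hseg hz)).trans ?_
  have := norm_sub_le_of_mem_segment hz
  gcongr

lemma mul_geom_sum_le_div {c q : ℝ} (hc : 0 ≤ c) (hq : 0 ≤ q) (hq1 : q < 1) (k : ℕ) :
    c * ∑ i ∈ Finset.range k, q ^ i ≤ c / (1 - q) := by
  rw [div_eq_mul_one_div]
  gcongr
  simpa using geom_sum_Ico_le_of_lt_one hq hq1 (m := 0) (n := k)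

section ResidualContraction

variable {E G : Type*} [MetricSpace E] [NormedAddCommGroup G]
  {Ω : Set E} {F : E → G} {g : E → E} {μ q β : ℝ} {x₀ : E}

lemma residual_contraction_iterate_bounds (hμ : 0 ≤ μ) (hq : 0 ≤ q) (hq1 : q < 1)
    (hstep : ∀ x ∈ Ω, dist (g x) x ≤ μ * ‖F x‖)
    (hdecay : ∀ x ∈ Ω, g x ∈ Ω → ‖F x‖ < β → ‖F (g x)‖ ≤ q * ‖F x‖)
    (hF₀ : ‖F x₀‖ < β) (hball : Metric.closedBall x₀ (μ * ‖F x₀‖ / (1 - q)) ⊆ Ω) (k : ℕ) :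
    g^[k] x₀ ∈ Ω ∧ ‖F (g^[k] x₀)‖ ≤ q ^ k * ‖F x₀‖ ∧
      dist (g^[k] x₀) x₀ ≤ μ * ‖F x₀‖ * ∑ i ∈ Finset.range k, q ^ i := by
  induction k with
  | zero =>
    simpa using hball (Metric.mem_closedBall_self (div_nonneg (by positivity) (by linarith)))
  | succ k ih =>
    obtain ⟨hmem, hres, hdist⟩ := ih
    rw [Function.iterate_succ_apply']
    have hjump : dist (g (g^[k] x₀)) (g^[k] x₀) ≤ μ * ‖F x₀‖ * q ^ k :=
      calc dist (g (g^[k] x₀)) (g^[k] x₀) ≤ μ * ‖F (g^[k] x₀)‖ := hstep _ hmem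
        _ ≤ μ * (q ^ k * ‖F x₀‖) := by gcongr
        _ = μ * ‖F x₀‖ * q ^ k := by ring
    have hdist' : dist (g (g^[k] x₀)) x₀ ≤ μ * ‖F x₀‖ * ∑ i ∈ Finset.range (k + 1), q ^ i := by
      rw [Finset.sum_range_succ, mul_add]
      exact (dist_triangle _ _ _).trans (by linarith)
    have hmem' : g (g^[k] x₀) ∈ Ω :=
      hball (hdist'.trans (mul_geom_sum_le_div (by positivity) hq hq1 _))
    have hsmall : ‖F (g^[k] x₀)‖ < β :=
      hres.trans_lt ((mul_le_of_le_one_left (norm_nonneg _) (pow_le_one₀ hq hq1.le)).trans_lt hF₀)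
    refine ⟨hmem', ?_, hdist'⟩
    calc ‖F (g (g^[k] x₀))‖ ≤ q * ‖F (g^[k] x₀)‖ := hdecay _ hmem hmem' hsmall
      _ ≤ q * (q ^ k * ‖F x₀‖) := by gcongr
      _ = q ^ (k + 1) * ‖F x₀‖ := by ring

theorem exists_zero_tendsto_of_residual_contraction [CompleteSpace E] (hμ : 0 ≤ μ) (hq : 0 ≤ q)
    (hq1 : q < 1) (hstep : ∀ x ∈ Ω, dist (g x) x ≤ μ * ‖F x‖)
    (hdecay : ∀ x ∈ Ω, g x ∈ Ω → ‖F x‖ < β → ‖F (g x)‖ ≤ q * ‖F x‖)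
    (hF₀ : ‖F x₀‖ < β) (hball : Metric.closedBall x₀ (μ * ‖F x₀‖ / (1 - q)) ⊆ Ω)
    (hF : ContinuousOn F Ω) :
    (∀ k, g^[k] x₀ ∈ Ω) ∧ ∃ x' ∈ Ω, F x' = 0 ∧ Tendsto (fun k ↦ g^[k] x₀) atTop (𝓝 x') := by
  have bounds := residual_contraction_iterate_bounds hμ hq hq1 hstep hdecay hF₀ hball
  have hmem k : g^[k] x₀ ∈ Ω := (bounds k).1
  have hcauchy : CauchySeq fun k ↦ g^[k] x₀ := by
    refine cauchySeq_of_le_geometric q (μ * ‖F x₀‖) hq1 fun k ↦ ?_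
    rw [dist_comm, Function.iterate_succ_apply']
    calc dist (g (g^[k] x₀)) (g^[k] x₀) ≤ μ * ‖F (g^[k] x₀)‖ := hstep _ (hmem k)
      _ ≤ μ * (q ^ k * ‖F x₀‖) := by gcongr; exact (bounds k).2.1
      _ = μ * ‖F x₀‖ * q ^ k := by ring
  obtain ⟨x', hx'⟩ := cauchySeq_tendsto_of_complete hcauchy
  have hx'Ω : x' ∈ Ω := by
    refine hball (Metric.isClosed_closedBall.mem_of_tendsto hx' (Eventually.of_forall fun k ↦ ?_))
    exact (bounds k).2.2.trans (mul_geom_sum_le_div (by positivity) hq hq1 k)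
  have hres : Tendsto (fun k ↦ F (g^[k] x₀)) atTop (𝓝 0) := by
    refine squeeze_zero_norm (fun k ↦ (bounds k).2.1) ?_
    simpa using (tendsto_pow_atTop_nhds_zero_of_lt_one hq hq1).mul_const ‖F x₀‖
  have hlim : Tendsto (fun k ↦ F (g^[k] x₀)) atTop (𝓝 (F x')) :=
    (hF x' hx'Ω).tendsto.comp (tendsto_nhdsWithin_iff.mpr ⟨hx', Eventually.of_forall hmem⟩)
  exact ⟨hmem, x', hx'Ω, tendsto_nhds_unique hlim hres, hx'⟩

end ResidualContraction

lemma exists_pos_mul_rpow_lt_one_and_div_lt {a μ p η : ℝ} (hp : 0 < p) (hη : 0 < η) :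
    ∃ β > 0, a * β ^ p < 1 ∧ μ * β / (1 - a * β ^ p) < η := by
  have hpow : Tendsto (fun β : ℝ ↦ a * β ^ p) (𝓝 0) (𝓝 0) := by
    simpa [Real.zero_rpow hp.ne'] using
      ((Real.continuousAt_rpow_const 0 p (Or.inr hp.le)).tendsto).const_mul a
  have hdiv : Tendsto (fun β : ℝ ↦ μ * β / (1 - a * β ^ p)) (𝓝 0) (𝓝 0) := by
    simpa [Pi.div_def] using (tendsto_id.const_mul μ).div (hpow.const_sub 1) (by norm_num)
  have hnear := (hpow.eventually (gt_mem_nhds one_pos)).and (hdiv.eventually (gt_mem_nhds hη))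
  obtain ⟨β, hβ, hβ'⟩ :=
    ((hnear.filter_mono nhdsWithin_le_nhds).and (self_mem_nhdsWithin (s := Set.Ioi 0))).exists
  exact ⟨β, hβ', hβ⟩

section NormalFlow

variable {n m : ℕ} {F : EuclideanSpace ℝ (Fin n) → EuclideanSpace ℝ (Fin m)}
  {J : EuclideanSpace ℝ (Fin n) → Matrix (Fin m) (Fin n) ℝ} {x : EuclideanSpace ℝ (Fin n)}

noncomputable def normalFlowStep (F : EuclideanSpace ℝ (Fin n) → EuclideanSpace ℝ (Fin m))
    (J : EuclideanSpace ℝ (Fin n) → Matrix (Fin m) (Fin n) ℝ) (x : EuclideanSpace ℝ (Fin n)) :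
    EuclideanSpace ℝ (Fin n) :=
  x - toEuclideanLin (pinvRow (J x)) (F x)

lemma dist_normalFlowStep_le {μ : ℝ} (hpinv : specNorm (pinvRow (J x)) ≤ μ) :
    dist (normalFlowStep F J x) x ≤ μ * ‖F x‖ := by
  rw [dist_eq_norm, normalFlowStep, sub_sub_cancel_left, norm_neg]
  exact (norm_toEuclideanLin_le_specNorm _ _).trans (by gcongr)

lemma toEuclideanLin_normalFlowStep_sub (hrank : (J x).rank = m) :
    toEuclideanLin (J x) (normalFlowStep F J x - x) = -F x := by
  rw [normalFlowStep, sub_sub_cancel_left, map_neg, ← LinearMap.comp_apply,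
    ← Matrix.toLpLin_mul_same, mul_pinvRow_eq_one hrank, toLpLin_one, LinearMap.id_apply]

lemma norm_apply_normalFlowStep_le {Ω : Set (EuclideanSpace ℝ (Fin n))} {γ p μ β : ℝ}
    (hΩ : Convex ℝ Ω)
    (hdiff : ∀ y ∈ Ω, HasFDerivAt F (LinearMap.toContinuousLinearMap (toEuclideanLin (J y))) y)
    (hHolder : ∀ y ∈ Ω, ∀ z ∈ Ω, specNorm (J z - J y) ≤ γ * ‖z - y‖ ^ p)
    (hγ : 0 ≤ γ) (hp : 0 ≤ p) (hμ : 0 ≤ μ) (hrank : (J x).rank = m)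
    (hpinv : specNorm (pinvRow (J x)) ≤ μ) (hx : x ∈ Ω) (hx' : normalFlowStep F J x ∈ Ω)
    (hFx : ‖F x‖ ≤ β) :
    ‖F (normalFlowStep F J x)‖ ≤ γ * μ ^ (1 + p) * β ^ p * ‖F x‖ := by
  have hfderiv : ∀ y ∈ Ω, ∀ z ∈ Ω, ‖LinearMap.toContinuousLinearMap (toEuclideanLin (J z)) -
      LinearMap.toContinuousLinearMap (toEuclideanLin (J y))‖ ≤ γ * ‖z - y‖ ^ p := fun y hy z hz ↦ by
    rw [← map_sub, ← map_sub]
    exact (norm_toContinuousLinearMap_toEuclideanLin_le_specNorm _).trans (hHolder y hy z hz)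
  have htaylor := norm_sub_sub_le_of_holder_fderiv hΩ (fun y hy ↦ (hdiff y hy).hasFDerivWithinAt)
    hfderiv hγ hp hx hx'
  rw [LinearMap.coe_toContinuousLinearMap', toEuclideanLin_normalFlowStep_sub hrank,
    sub_neg_eq_add, sub_add_cancel] at htaylor
  have hstep : ‖normalFlowStep F J x - x‖ ≤ μ * ‖F x‖ := by
    rw [← dist_eq_norm]; exact dist_normalFlowStep_le hpinv
  have hβ : 0 ≤ β := (norm_nonneg _).trans hFx
  calc ‖F (normalFlowStep F J x)‖
      ≤ γ * ‖normalFlowStep F J x - x‖ ^ p * ‖normalFlowStep F J x - x‖ := htaylor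
    _ ≤ γ * (μ * β) ^ p * (μ * ‖F x‖) := by
      gcongr
      exact hstep.trans (by gcongr)
    _ = γ * μ ^ (1 + p) * β ^ p * ‖F x‖ := by
      rw [Real.mul_rpow hμ hβ, Real.rpow_add' hμ (by positivity), Real.rpow_one]
      ring

end NormalFlow

theorem kantorovich_normal_flow_general {n m : ℕ}
    (D Ω : Set (EuclideanSpace ℝ (Fin n)))
    (hΩD : Ω ⊆ D) (hΩconv : Convex ℝ Ω)
    (F : EuclideanSpace ℝ (Fin n) → EuclideanSpace ℝ (Fin m))
    (J : EuclideanSpace ℝ (Fin n) → Matrix (Fin m) (Fin n) ℝ)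
    (hdiff : ∀ x ∈ D, HasFDerivAt F
      (LinearMap.toContinuousLinearMap (Matrix.toEuclideanLin (J x))) x)
    (hrank : ∀ x ∈ Ω, (J x).rank = m)
    (γ p : ℝ) (hγ : 0 ≤ γ) (hp1 : 0 < p)
    (hHolder : ∀ x ∈ Ω, ∀ y ∈ Ω, specNorm (J y - J x) ≤ γ * ‖y - x‖ ^ p)
    (μ : ℝ) (hμ : 0 < μ)
    (hpinv : ∀ x ∈ Ω, specNorm (pinvRow (J x)) ≤ μ)
    (η : ℝ) (hη : 0 < η) :
    ∃ β > (0:ℝ),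
      γ * μ ^ (1 + p) * β ^ p / (1 + p) < 1 ∧
      μ * β / (1 - γ * μ ^ (1 + p) * β ^ p / (1 + p)) < η ∧
      ∀ x₀ ∈ Ω, (∀ y, ‖y - x₀‖ < η → y ∈ Ω) → ‖F x₀‖ < β →
        ∃ xs : ℕ → EuclideanSpace ℝ (Fin n),
          xs 0 = x₀ ∧
          (∀ k, xs (k + 1) = xs k - (WithLp.equiv 2 (Fin n → ℝ)).symm
            ((pinvRow (J (xs k))).mulVec (WithLp.equiv 2 (Fin m → ℝ) (F (xs k))))) ∧
          (∀ k, xs k ∈ Ω) ∧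
          ∃ xstar ∈ Ω, F xstar = 0 ∧
            Filter.Tendsto xs Filter.atTop (nhds xstar) := by
  -- Our Taylor bound lacks the factor `1/(1+p)`, so the residual contracts by `q = (1+p) τ ≥ τ`.
  obtain ⟨β, hβ, hq1, hβη⟩ :=
    exists_pos_mul_rpow_lt_one_and_div_lt (a := γ * μ ^ (1 + p)) (μ := μ) hp1 hη
  set q := γ * μ ^ (1 + p) * β ^ p
  have hq : 0 ≤ q := by positivity
  have hτq : q / (1 + p) ≤ q := div_le_self hq (by linarith)
  refine ⟨β, hβ, hτq.trans_lt hq1,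
    (div_le_div_of_nonneg_left (by positivity) (by linarith) (by linarith)).trans_lt hβη, ?_⟩
  intro x₀ _ hball hF₀
  have hclosedBall : Metric.closedBall x₀ (μ * ‖F x₀‖ / (1 - q)) ⊆ Ω := fun y hy ↦
    hball y (by rw [← dist_eq_norm]; exact hy.trans_lt (lt_of_le_of_lt (by gcongr) hβη))
  have hdiffΩ x (hx : x ∈ Ω) := hdiff x (hΩD hx)
  obtain ⟨hmem, xstar, hxstar, hFxstar, hlim⟩ :=
    exists_zero_tendsto_of_residual_contraction (g := normalFlowStep F J) hμ.le hq hq1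
      (fun x hx ↦ dist_normalFlowStep_le (hpinv x hx))
      (fun x hx hx' hFx ↦ norm_apply_normalFlowStep_le hΩconv hdiffΩ hHolder hγ hp1.le hμ.le
        (hrank x hx) (hpinv x hx) hx hx' hFx.le)
      hF₀ hclosedBall fun x hx ↦ (hdiffΩ x hx).continuousAt.continuousWithinAt
  exact ⟨fun k ↦ (normalFlowStep F J)^[k] x₀, rfl, fun k ↦ Function.iterate_succ_apply' _ k x₀,
    hmem, xstar, hxstar, hFxstar, hlim⟩

/-- Kantorovich-type local convergence of the Normal Flow iteration. -/
theorem kantorovich_normal_flow {n m : ℕ} (hmn : m ≤ n)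
    (D Ω : Set (EuclideanSpace ℝ (Fin n)))
    (hD : IsOpen D) (hΩ : IsOpen Ω) (hΩD : Ω ⊆ D) (hΩconv : Convex ℝ Ω)
    (F : EuclideanSpace ℝ (Fin n) → EuclideanSpace ℝ (Fin m))
    (J : EuclideanSpace ℝ (Fin n) → Matrix (Fin m) (Fin n) ℝ)
    (hdiff : ∀ x ∈ D, HasFDerivAt F
      (LinearMap.toContinuousLinearMap (Matrix.toEuclideanLin (J x))) x)
    (hrank : ∀ x ∈ Ω, (J x).rank = m)
    (γ p : ℝ) (hγ : 0 ≤ γ) (hp1 : 0 < p) (hp2 : p ≤ 1)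
    (hHolder : ∀ x ∈ Ω, ∀ y ∈ Ω, specNorm (J y - J x) ≤ γ * ‖y - x‖ ^ p)
    (μ : ℝ) (hμ : 0 < μ)
    (hpinv : ∀ x ∈ Ω, specNorm (pinvRow (J x)) ≤ μ)
    (η : ℝ) (hη : 0 < η) :
    ∃ β > (0:ℝ),
      γ * μ ^ (1 + p) * β ^ p / (1 + p) < 1 ∧
      μ * β / (1 - γ * μ ^ (1 + p) * β ^ p / (1 + p)) < η ∧
      ∀ x₀ ∈ Ω, (∀ y, ‖y - x₀‖ < η → y ∈ Ω) → ‖F x₀‖ < β →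
        ∃ xs : ℕ → EuclideanSpace ℝ (Fin n),
          xs 0 = x₀ ∧
          (∀ k, xs (k + 1) = xs k - (WithLp.equiv 2 (Fin n → ℝ)).symm
            ((pinvRow (J (xs k))).mulVec (WithLp.equiv 2 (Fin m → ℝ) (F (xs k))))) ∧
          (∀ k, xs k ∈ Ω) ∧
          ∃ xstar ∈ Ω, F xstar = 0 ∧
            Filter.Tendsto xs Filter.atTop (nhds xstar) :=
  kantorovich_normal_flow_general D Ω hΩD hΩconv F J hdiff hrank γ p hγ hp1 hHolder μ hμ hpinv η hη
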